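/- In the d-dimensional lattice graph, for d ≤ t ≤ dn−1, the kernel of T₁^{(t−1)} is contained in the kernel of T₁^{(t)}: if φ supported on J_{t−1}^S yields a γ-harmonic extension vanishing on L_t, then the zero-extension of φ to J_t^S yields a γ-harmonic extension vanishing on L_{t+1}. -/

import Mathlib

/-!
Let `S = D \ L_t^S` be the part of `D` strictly above the slice `L_t`. A neighbour of `S` outside
`S` either lies in `L_t`, where `u` vanishes by assumption, or is a boundary node outside the
support `J_{t-1}^S` of `φ`: its diagonal height is at least `t`, and at least `t + 2` if it lies on
the upper boundary `x_i = n + 1`. Hence the restriction of `u` to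
`S` is `γ`-harmonic on `S` and vanishes off `S`, and Green's identity
`2 ∑ v Δ_γ v = -∑ γ (∇v)²` forces it to be constant along every edge. Every node of `L_{t+1}`
has a neighbour one level lower, outside `S`, so `u` vanishes on `L_{t+1}`.
-/

noncomputable section
open Classical Finset

namespace DiscreteCalderon

/-- Vertices of the ambient lattice `ℤ^d`. -/
abbrev V (d : ℕ) := Fin d → ℤ

/-- Interior vertex set `D = {x : 1 ≤ x_i ≤ n}`. -/
def Dset (d n : ℕ) : Set (V d) := {x | ∀ i, 1 ≤ x i ∧ x i ≤ (n : ℤ)}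

/-- ℓ¹ distance. -/
def dist1 {d : ℕ} (p q : V d) : ℤ := ∑ i, |p i - q i|

/-- Boundary vertex set `∂D`: vertices at ℓ¹ distance 1 from `D`. -/
def Bset (d n : ℕ) : Set (V d) := {p | p ∉ Dset d n ∧ ∃ q ∈ Dset d n, dist1 p q = 1}

/-- All vertices of the graph, `D ∪ ∂D`. -/
def Vset (d n : ℕ) : Set (V d) := Dset d n ∪ Bset d n

/-- Adjacency of the lattice graph: ℓ¹ distance 1, both endpoints vertices,
not both on the boundary. -/
def Adj (d n : ℕ) (p q : V d) : Prop :=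
  dist1 p q = 1 ∧ p ∈ Vset d n ∧ q ∈ Vset d n ∧ (p ∈ Dset d n ∨ q ∈ Dset d n)

/-- A finite box containing all vertices. -/
def box (d n : ℕ) : Finset (V d) :=
  Fintype.piFinset (fun _ : Fin d => Finset.Icc (0 : ℤ) ((n : ℤ) + 1))

/-- Neighbours of `p` in the graph, as a finite set. -/
def nbr (d n : ℕ) (p : V d) : Finset (V d) := (box d n).filter (fun q => Adj d n p q)

/-- Interior neighbours of `p`. -/
def nbrD (d n : ℕ) (p : V d) : Finset (V d) := (nbr d n p).filter (fun q => q ∈ Dset d n)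

/-- The discrete (weighted) Laplacian `(Δ_γ u)_p = ∑_{q∈N(p)} γ_{qp}(u_q - u_p)`. -/
def lap (d n : ℕ) (γ : V d → V d → ℝ) (u : V d → ℝ) (p : V d) : ℝ :=
  ∑ q ∈ nbr d n p, γ q p * (u q - u p)

/-- The boundary current `(D_γ u)_p = ∑_{q∈N(p)∩D} γ_{pq}(u_q - u_p)`
(there is exactly one interior neighbour of a boundary node). -/
def cur (d n : ℕ) (γ : V d → V d → ℝ) (u : V d → ℝ) (p : V d) : ℝ :=
  ∑ q ∈ nbrD d n p, γ p q * (u q - u p)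

/-- A strictly positive symmetric conductivity. -/
def GoodCond (d n : ℕ) (γ : V d → V d → ℝ) : Prop :=
  (∀ p q, γ p q = γ q p) ∧ ∀ p q, Adj d n p q → 0 < γ p q

/-- The coordinate sum of a lattice point. -/
def sum1 {d : ℕ} (x : V d) : ℤ := ∑ i, x i

/-- Interior diagonal slice `L_t`. -/
def L (d n : ℕ) (t : ℤ) : Set (V d) := {x | x ∈ Dset d n ∧ sum1 x = t}

/-- `L_t^S = ∪_{ℓ ≤ t} L_ℓ`. -/
def LS (d n : ℕ) (t : ℤ) : Set (V d) := {x | x ∈ Dset d n ∧ sum1 x ≤ t}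

/-- Boundary diagonal slice `K_t`. -/
def K (d n : ℕ) (t : ℤ) : Set (V d) := {x | x ∈ Bset d n ∧ sum1 x = t}

/-- `K_t^- = {x ∈ K_t : min_i x_i = 0}`. -/
def Km (d n : ℕ) (t : ℤ) : Set (V d) := {x | x ∈ K d n t ∧ ∃ i, x i = 0}

/-- `K_t^+ = {x ∈ K_t : max_i x_i = n+1}`. -/
def Kp (d n : ℕ) (t : ℤ) : Set (V d) := {x | x ∈ K d n t ∧ ∃ i, x i = (n : ℤ) + 1}

/-- `K_t^{S-} = ∪_{ℓ ≤ t} K_ℓ^-`. -/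
def KSm (d n : ℕ) (t : ℤ) : Set (V d) := {x | x ∈ Bset d n ∧ sum1 x ≤ t ∧ ∃ i, x i = 0}

/-- `K_t^{S+} = ∪_{ℓ ≤ t} K_ℓ^+`. -/
def KSp (d n : ℕ) (t : ℤ) : Set (V d) := {x | x ∈ Bset d n ∧ sum1 x ≤ t ∧ ∃ i, x i = (n : ℤ) + 1}

/-- The lower boundary region `J_t^S = K_t^{S-} ∪ K_{t+1}^{S+}`. -/
def JS (d n : ℕ) (t : ℤ) : Set (V d) := KSm d n t ∪ KSp d n (t + 1)

/-- `J_t = K_t^- ∪ K_{t+1}^+`. -/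
def Jslice (d n : ℕ) (t : ℤ) : Set (V d) := Km d n t ∪ Kp d n (t + 1)

/-- `u` is the γ-harmonic extension of boundary data `φ` (zero-extension convention
outside `D ∪ ∂D`). -/
def IsSol (d n : ℕ) (γ : V d → V d → ℝ) (φ u : V d → ℝ) : Prop :=
  (∀ p, p ∉ Vset d n → u p = 0) ∧
  (∀ p ∈ Dset d n, lap d n γ u p = 0) ∧
  (∀ p ∈ Bset d n, u p = φ p)

/-- The Laplacian row vector `v_p`. -/
def vrow (d n : ℕ) (γ : V d → V d → ℝ) (p : V d) : V d → ℝ := fun q =>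
  if Adj d n p q then γ p q
  else if q = p then -(∑ r ∈ nbr d n p, γ p r) else 0

/-- Restriction of a function to a set (zero outside). -/
def rst {d : ℕ} (S : Set (V d)) (f : V d → ℝ) : V d → ℝ := fun q => if q ∈ S then f q else 0

/-- Euclidean inner product of (vertex-supported) functions. -/
def dot (d n : ℕ) (f g : V d → ℝ) : ℝ := ∑ p ∈ box d n, f p * g p

/-- The localized solution space `𝒰^{(t)}`: restrictions to `L_t^S ∪ J_t^S` of
harmonic extensions of boundary potentials in `ker T₁^{(t)}`. -/
def Uset (d n : ℕ) (γ : V d → V d → ℝ) (t : ℤ) : Set (V d → ℝ) :=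
  {u | (∀ p, p ∉ LS d n t ∪ JS d n t → u p = 0) ∧
    ∃ φ w : V d → ℝ, (∀ p, p ∉ JS d n t → φ p = 0) ∧ IsSol d n γ φ w ∧
      (∀ p ∈ L d n (t + 1), w p = 0) ∧ ∀ p ∈ LS d n t ∪ JS d n t, u p = w p}

/-- The set `E_t` of edges between the consecutive layers:
`E(K_t^-, L_{t+1}) ∪ E(L_t, K_{t+1}^+) ∪ E(L_t, L_{t+1})`. -/
def EdgeT (d n : ℕ) (t : ℤ) (p q : V d) : Prop :=
  Adj d n p q ∧
    ((p ∈ Km d n t ∧ q ∈ L d n (t + 1)) ∨ (q ∈ Km d n t ∧ p ∈ L d n (t + 1)) ∨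
     (p ∈ L d n t ∧ q ∈ Kp d n (t + 1)) ∨ (q ∈ L d n t ∧ p ∈ Kp d n (t + 1)) ∨
     (p ∈ L d n t ∧ q ∈ L d n (t + 1)) ∨ (q ∈ L d n t ∧ p ∈ L d n (t + 1)))

/-- The edge vector `J_p^u ∈ ℝ^{E_t}`, `J_p^u(pq) = u_p - u_q` on edges of `E_t`
incident to `p`, and `0` otherwise (as a symmetric function of edge endpoints). -/
def Jvec (d n : ℕ) (t : ℤ) (u : V d → ℝ) (p : V d) : V d → V d → ℝ := fun a b =>
  if EdgeT d n t a b then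
    (if a = p then u a - u b else if b = p then u b - u a else 0)
  else 0

/-- Inner product of edge functions. -/
def dotE (d n : ℕ) (f g : V d → V d → ℝ) : ℝ :=
  ∑ p ∈ box d n, ∑ q ∈ box d n, f p q * g p q

section Geometry

variable {d n : ℕ}

lemma dist1_comm (p q : V d) : dist1 p q = dist1 q p :=
  sum_congr rfl fun _ _ => abs_sub_comm _ _

lemma adj_comm {p q : V d} : Adj d n p q ↔ Adj d n q p :=
  have key {p q : V d} (h : Adj d n p q) : Adj d n q p :=
    ⟨(dist1_comm q p).trans h.1, h.2.2.1, h.2.1, h.2.2.2.symm⟩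
  ⟨key, key⟩

lemma abs_sub_le_dist1 (p q : V d) (i : Fin d) : |p i - q i| ≤ dist1 p q :=
  single_le_sum (f := fun j => |p j - q j|) (fun _ _ => abs_nonneg _) (mem_univ i)

lemma abs_sum1_sub_le_dist1 (p q : V d) : |sum1 p - sum1 q| ≤ dist1 p q := by
  rw [sum1, sum1, ← sum_sub_distrib]
  exact abs_sum_le_sum_abs _ _

lemma sum1_eq_add_one_of_lt {p q : V d} (h : dist1 p q = 1) {i : Fin d} (hi : p i < q i) :
    sum1 q = sum1 p + 1 := by
  have hdist : |p i - q i| + ∑ j ∈ univ.erase i, |p j - q j| = 1 := by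
    rw [add_sum_erase univ (fun j => |p j - q j|) (mem_univ i)]; exact h
  have hsum : sum1 q - sum1 p = (q i - p i) + ∑ j ∈ univ.erase i, (q j - p j) := by
    rw [add_sum_erase univ (fun j => q j - p j) (mem_univ i), sum1, sum1, sum_sub_distrib]
  have hrest : |∑ j ∈ univ.erase i, (q j - p j)| ≤ ∑ j ∈ univ.erase i, |p j - q j| := by
    simpa only [abs_sub_comm] using abs_sum_le_sum_abs (fun j => q j - p j) (univ.erase i)
  rw [abs_of_neg (sub_neg.2 hi)] at hdist
  have := abs_le.1 hrest
  omega

lemma mem_box_of_mem_Vset {p : V d} (hp : p ∈ Vset d n) : p ∈ box d n := by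
  simp only [box, Fintype.mem_piFinset, mem_Icc]
  intro i
  rcases hp with hD | ⟨-, q, hq, hpq⟩
  · have := hD i; omega
  · have := abs_le.1 ((abs_sub_le_dist1 p q i).trans hpq.le)
    have := hq i
    omega

lemma exists_adj_sum1_eq_sub_one (hd : 0 < d) {p : V d} (hp : p ∈ Dset d n) :
    ∃ q, Adj d n p q ∧ sum1 q = sum1 p - 1 := by
  set i : Fin d := ⟨0, hd⟩
  set q := Function.update p i (p i - 1)
  have hqp : dist1 q p = 1 := by
    rw [dist1, sum_eq_single_of_mem i (mem_univ i) fun j _ hj => by simp [q, hj]]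
    simp [q]
  have hqV : q ∈ Vset d n := by
    by_cases hqD : q ∈ Dset d n
    · exact Or.inl hqD
    · exact Or.inr ⟨hqD, p, hp, hqp⟩
  refine ⟨q, adj_comm.2 ⟨hqp, hqV, Or.inl hp, Or.inr hp⟩, ?_⟩
  have := sum1_eq_add_one_of_lt hqp (i := i) (by simp [q])
  omega

end Geometry

section Energy

variable {d n : ℕ} {γ : V d → V d → ℝ}

lemma sum_sum_nbr_comm (f : V d → V d → ℝ) :
    ∑ p ∈ box d n, ∑ q ∈ nbr d n p, f p q = ∑ p ∈ box d n, ∑ q ∈ nbr d n p, f q p := by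
  simp only [nbr, sum_filter]
  rw [sum_comm]
  exact sum_congr rfl fun p _ => sum_congr rfl fun q _ => by simp only [adj_comm]

lemma two_mul_sum_mul_lap (hγ : ∀ p q, γ p q = γ q p) (v : V d → ℝ) :
    2 * ∑ p ∈ box d n, v p * lap d n γ v p =
      -∑ p ∈ box d n, ∑ q ∈ nbr d n p, γ q p * (v q - v p) ^ 2 := by
  have hswap := sum_sum_nbr_comm (n := n) fun p q => v p * (γ q p * (v q - v p))
  rw [two_mul]
  simp only [lap, mul_sum] at hswap ⊢
  nth_rewrite 2 [hswap]
  rw [← sum_add_distrib, ← sum_neg_distrib]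
  refine sum_congr rfl fun p _ => ?_
  rw [← sum_add_distrib, ← sum_neg_distrib]
  refine sum_congr rfl fun q _ => ?_
  rw [hγ p q]
  ring

lemma eq_of_adj_of_lap_eq_zero (hγ : GoodCond d n γ) {S : Set (V d)} {v : V d → ℝ}
    (hv : ∀ p ∉ S, v p = 0) (hlap : ∀ p ∈ S, lap d n γ v p = 0) {p q : V d}
    (hpq : Adj d n p q) : v p = v q := by
  have hterm_nonneg : ∀ p ∈ box d n, ∀ q ∈ nbr d n p, 0 ≤ γ q p * (v q - v p) ^ 2 :=
    fun p _ q hq => mul_nonneg (hγ.2 q p (adj_comm.1 (mem_filter.1 hq).2)).le (sq_nonneg _)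
  have henergy : ∑ p ∈ box d n, ∑ q ∈ nbr d n p, γ q p * (v q - v p) ^ 2 = 0 := by
    have hzero : ∑ p ∈ box d n, v p * lap d n γ v p = 0 :=
      sum_eq_zero fun p _ => by
        by_cases hp : p ∈ S
        · rw [hlap p hp, mul_zero]
        · rw [hv p hp, zero_mul]
    linarith [two_mul_sum_mul_lap (n := n) hγ.1 v]
  have hpB := mem_box_of_mem_Vset hpq.2.1
  have hqN : q ∈ nbr d n p := mem_filter.2 ⟨mem_box_of_mem_Vset hpq.2.2.1, hpq⟩
  have hedge : γ q p * (v q - v p) ^ 2 = 0 :=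
    (sum_eq_zero_iff_of_nonneg (hterm_nonneg p hpB)).1
      ((sum_eq_zero_iff_of_nonneg fun p hp => sum_nonneg (hterm_nonneg p hp)).1 henergy p hpB)
      q hqN
  have hγpos := hγ.2 q p (adj_comm.1 hpq)
  have := pow_eq_zero_iff two_ne_zero |>.1 ((mul_eq_zero.1 hedge).resolve_left hγpos.ne')
  linarith

lemma lap_rst_of_forall_adj {S : Set (V d)} {u : V d → ℝ} {p : V d} (hp : p ∈ S)
    (hu : ∀ q, Adj d n p q → q ∉ S → u q = 0) : lap d n γ (rst S u) p = lap d n γ u p := by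
  refine sum_congr rfl fun q hq => ?_
  have hrst : rst S u q = u q := by
    by_cases hqS : q ∈ S
    · exact if_pos hqS
    · rw [rst, if_neg hqS, hu q (mem_filter.1 hq).2 hqS]
  rw [hrst, rst, if_pos hp]

end Energy

lemma mem_Dset_sdiff_LS {d n : ℕ} {t : ℤ} {x : V d} :
    x ∈ Dset d n \ LS d n t ↔ x ∈ Dset d n ∧ t < sum1 x := by
  simp only [Set.mem_sdiff, LS, Set.mem_ofPred_eq, not_and, not_le]
  exact ⟨fun h => ⟨h.1, h.2 h.1⟩, fun h => ⟨h.1, fun _ => h.2⟩⟩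

lemma eq_zero_of_adj_of_mem_Dset_sdiff_LS {d n : ℕ} {γ : V d → V d → ℝ} {t : ℤ}
    {φ u : V d → ℝ} (hφ : ∀ p, p ∉ JS d n (t - 1) → φ p = 0) (hu : IsSol d n γ φ u)
    (hker : ∀ p ∈ L d n t, u p = 0) {p q : V d} (hp : p ∈ Dset d n \ LS d n t)
    (hpq : Adj d n p q) (hq : q ∉ Dset d n \ LS d n t) : u q = 0 := by
  obtain ⟨hpD, hpt⟩ := mem_Dset_sdiff_LS.1 hp
  have hqt : t ≤ sum1 q := by
    have := abs_le.1 ((abs_sum1_sub_le_dist1 p q).trans hpq.1.le)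
    omega
  rcases hpq.2.2.1 with hqD | hqB
  · refine hker q ⟨hqD, le_antisymm ?_ hqt⟩
    by_contra! h
    exact hq (mem_Dset_sdiff_LS.2 ⟨hqD, h⟩)
  · rw [hu.2.2 q hqB]
    refine hφ q ?_
    rintro (⟨-, hle, -⟩ | ⟨-, hle, i, hqi⟩)
    · omega
    · have := sum1_eq_add_one_of_lt hpq.1 (i := i) (by have := hpD i; omega)
      omega

theorem stmt5_general (d n : ℕ) (hd : 2 ≤ d)
    (γ : V d → V d → ℝ) (hγ : GoodCond d n γ)
    (t : ℤ)
    (φ u : V d → ℝ)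
    (hφ : ∀ p, p ∉ JS d n (t - 1) → φ p = 0)
    (hu : IsSol d n γ φ u)
    (hker : ∀ p ∈ L d n t, u p = 0) :
    ∀ p ∈ L d n (t + 1), u p = 0 := by
  set S := Dset d n \ LS d n t
  have hharm : ∀ p ∈ S, lap d n γ (rst S u) p = 0 := fun p hp => by
    rw [lap_rst_of_forall_adj hp fun q hpq hq =>
      eq_zero_of_adj_of_mem_Dset_sdiff_LS hφ hu hker hp hpq hq]
    exact hu.2.1 p hp.1
  rintro p ⟨hpD, hpt⟩
  obtain ⟨q, hpq, hqt⟩ := exists_adj_sum1_eq_sub_one (by omega) hpD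
  have hpS : p ∈ S := mem_Dset_sdiff_LS.2 ⟨hpD, by omega⟩
  have hqS : q ∉ S := fun h => by have := (mem_Dset_sdiff_LS.1 h).2; omega
  calc u p = rst S u p := (if_pos hpS).symm
    _ = rst S u q := eq_of_adj_of_lap_eq_zero hγ (fun x hx => if_neg hx) hharm hpq
    _ = 0 := if_neg hqS

/-- monotonicity of kernels, `ker T₁^{(t-1)} ⊆ ker T₁^{(t)}`:
if the harmonic extension of a boundary potential supported on `J_{t-1}^S`
vanishes on `L_t`, then it vanishes on `L_{t+1}`. -/
theorem stmt5 (d n : ℕ) (hd : 2 ≤ d) (hn : 1 ≤ n)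
    (γ : V d → V d → ℝ) (hγ : GoodCond d n γ)
    (t : ℤ) (ht1 : (d : ℤ) ≤ t) (ht2 : t ≤ (d : ℤ) * n - 1)
    (φ u : V d → ℝ)
    (hφ : ∀ p, p ∉ JS d n (t - 1) → φ p = 0)
    (hu : IsSol d n γ φ u)
    (hker : ∀ p ∈ L d n t, u p = 0) :
    ∀ p ∈ L d n (t + 1), u p = 0 :=
  stmt5_general d n hd γ hγ t φ u hφ hu hker

end DiscreteCalderon
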